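/- arXiv:2406.06928 — 3 statements merged into one kernel-verified Lean document; each statement's English description precedes it below -/
import Mathlib

section
/- Let a : ℝ → (0,∞) and b : ℝ → (0,1) be continuous 1-periodic functions. Define d₀ = √(2∫₀¹ a(s)ds) · (1/2 - (∫₀¹ a(s)b(s)ds)/(∫₀¹ a(s)ds)) and d* = ∫₀¹ √(2a(s)) (1/2 - b(s)) ds. If b ≡ b₀ is a constant with 0 < b₀ < 1/2, then d₀ ≥ d* > 0; if 1/2 < b₀ < 1, then d₀ ≤ d* < 0. -/
/-!
For constant `b ≡ b₀` both speeds factor through `1/2 - b₀`: `d₀ = √(2∫a) (1/2 - b₀)` and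
`d* = (∫√(2a)) (1/2 - b₀)`. Jensen's inequality for the concave square root on the probability
space `[0, 1]` gives `∫√(2a) ≤ √(2∫a)`, and the sign of `1/2 - b₀` orients the comparison.
-/

open MeasureTheory

/-- If `√f` is not integrable the left side is the junk value `0`. -/
theorem integral_sqrt_le_sqrt_integral {α : Type*} [MeasurableSpace α] {μ : Measure α}
    [IsProbabilityMeasure μ] {f : α → ℝ} (hf0 : 0 ≤ᵐ[μ] f) (hf : Integrable f μ) :
    ∫ x, √(f x) ∂μ ≤ √(∫ x, f x ∂μ) := by
  by_cases hsqrt : Integrable (fun x => √(f x)) μ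
  · exact Real.strictConcaveOn_sqrt.concaveOn.le_map_integral Real.continuous_sqrt.continuousOn
      isClosed_Ici hf0 hf hsqrt
  · rw [integral_undef hsqrt]
    exact Real.sqrt_nonneg _

theorem intervalIntegral_sqrt_le_sqrt_intervalIntegral {f : ℝ → ℝ}
    (hf0 : ∀ x ∈ Set.Ioc (0 : ℝ) 1, 0 ≤ f x) (hf : IntervalIntegrable f volume 0 1) :
    ∫ x in (0 : ℝ)..1, √(f x) ≤ √(∫ x in (0 : ℝ)..1, f x) := by
  have : IsProbabilityMeasure (volume.restrict (Set.Ioc (0 : ℝ) 1)) :=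
    ⟨by simp [Real.volume_Ioc]⟩
  simp only [intervalIntegral.integral_of_le zero_le_one]
  exact integral_sqrt_le_sqrt_integral ((ae_restrict_iff' measurableSet_Ioc).2 (.of_forall hf0))
    hf.1

theorem stmt_12_general (a b : ℝ → ℝ) (ha : Continuous a)
    (hapos : ∀ s, 0 < a s)
    (b₀ : ℝ) (hbc : ∀ s, b s = b₀) :
    let d₀ : ℝ := Real.sqrt (2 * ∫ s in (0:ℝ)..1, a s) *
      (1 / 2 - (∫ s in (0:ℝ)..1, a s * b s) / (∫ s in (0:ℝ)..1, a s))
    let dstar : ℝ := ∫ s in (0:ℝ)..1, Real.sqrt (2 * a s) * (1 / 2 - b s)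
    (0 < b₀ → b₀ < 1 / 2 → d₀ ≥ dstar ∧ dstar > 0) ∧
      (1 / 2 < b₀ → b₀ < 1 → d₀ ≤ dstar ∧ dstar < 0) := by
  have hI : 0 < ∫ s in (0:ℝ)..1, a s :=
    intervalIntegral.intervalIntegral_pos_of_pos (ha.intervalIntegrable 0 1) hapos one_pos
  have hJ : 0 < ∫ s in (0:ℝ)..1, √(2 * a s) :=
    intervalIntegral.intervalIntegral_pos_of_pos
      ((by fun_prop : Continuous _).intervalIntegrable _ _)
      (fun s => Real.sqrt_pos.2 (by linarith [hapos s])) one_pos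
  have hJI : ∫ s in (0:ℝ)..1, √(2 * a s) ≤ √(2 * ∫ s in (0:ℝ)..1, a s) := by
    rw [← intervalIntegral.integral_const_mul]
    exact intervalIntegral_sqrt_le_sqrt_intervalIntegral (fun s _ => by linarith [hapos s])
      ((continuous_const.mul ha).intervalIntegrable 0 1)
  simp only [hbc, intervalIntegral.integral_mul_const, mul_div_cancel_left₀ _ hI.ne']
  constructor
  · intro _ hb₀
    exact ⟨mul_le_mul_of_nonneg_right hJI (by linarith), mul_pos hJ (by linarith)⟩
  · intro hb₀ _
    exact ⟨mul_le_mul_of_nonpos_right hJI (by linarith), mul_neg_of_pos_of_neg hJ (by linarith)⟩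

theorem stmt_12 (a b : ℝ → ℝ) (ha : Continuous a) (hb : Continuous b)
    (hap : ∀ s, a (s + 1) = a s) (hbp : ∀ s, b (s + 1) = b s)
    (hapos : ∀ s, 0 < a s) (hbr : ∀ s, b s ∈ Set.Ioo (0:ℝ) 1)
    (b₀ : ℝ) (hbc : ∀ s, b s = b₀) :
    let d₀ : ℝ := Real.sqrt (2 * ∫ s in (0:ℝ)..1, a s) *
      (1 / 2 - (∫ s in (0:ℝ)..1, a s * b s) / (∫ s in (0:ℝ)..1, a s))
    let dstar : ℝ := ∫ s in (0:ℝ)..1, Real.sqrt (2 * a s) * (1 / 2 - b s)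
    (0 < b₀ → b₀ < 1 / 2 → d₀ ≥ dstar ∧ dstar > 0) ∧
      (1 / 2 < b₀ → b₀ < 1 → d₀ ≤ dstar ∧ dstar < 0) :=
  stmt_12_general a b ha hapos b₀ hbc
end

section
/- Define the step function ã : ℝ → ℝ by ã(t) = 1 for t ∈ (k, k+1/4], ã(t) = 64/9 for t ∈ (k+1/4, k+1/2], ã(t) = 4 for t ∈ (k+1/2, k+1], for each integer k, and b̃(t) = 1/2 + (1/4)sin(2πt). Then d₀ := √(2∫₀¹ ã(s)ds) · (1/2 - (∫₀¹ ã(s)b̃(s)ds)/(∫₀¹ ã(s)ds)) = -1/(6√290 π) < 0 and d* := ∫₀¹ √(2ã(s))(1/2 - b̃(s)) ds = √2/(24π) > 0. In particular d₀ and d* have opposite signs. -/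
/-- The piecewise constant 1-periodic function with values 1, 64/9, 4 on
`(k, k+1/4]`, `(k+1/4, k+1/2]`, `(k+1/2, k+1]` respectively. -/
noncomputable def atil (t : ℝ) : ℝ :=
  if Int.fract t ∈ Set.Ioc (0:ℝ) (1 / 4) then 1
  else if Int.fract t ∈ Set.Ioc (1 / 4 : ℝ) (1 / 2) then 64 / 9
  else 4

noncomputable def btil (t : ℝ) : ℝ := 1 / 2 + (1 / 4) * Real.sin (2 * Real.pi * t)

lemma atil_eq1 {x : ℝ} (hx : x ∈ Set.Ioc (0:ℝ) (1/4)) : atil x = 1 := by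
  have h1 : Int.fract x = x :=
    Int.fract_eq_self.mpr ⟨hx.1.le, lt_of_le_of_lt hx.2 (by norm_num)⟩
  unfold atil
  rw [h1, if_pos hx]

lemma atil_eq2 {x : ℝ} (hx : x ∈ Set.Ioc (1/4:ℝ) (1/2)) : atil x = 64/9 := by
  have h1 : Int.fract x = x :=
    Int.fract_eq_self.mpr ⟨le_trans (by norm_num) hx.1.le, lt_of_le_of_lt hx.2 (by norm_num)⟩
  unfold atil
  rw [h1, if_neg (fun h => absurd h.2 (not_le.mpr hx.1)), if_pos hx]

lemma atil_eq3 {x : ℝ} (hx : x ∈ Set.Ioc (1/2:ℝ) 1) : atil x = 4 := by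
  rcases eq_or_lt_of_le hx.2 with h | h
  · subst h
    norm_num [atil, Int.fract_one]
  · have h1 : Int.fract x = x :=
      Int.fract_eq_self.mpr ⟨le_trans (by norm_num) hx.1.le, h⟩
    unfold atil
    rw [h1, if_neg (fun hh => absurd hh.2 (not_le.mpr (lt_trans (by norm_num) hx.1))),
      if_neg (fun hh => absurd hh.2 (not_le.mpr hx.1))]

lemma integral_congr_piece {f g : ℝ → ℝ} {a b : ℝ} (hab : a ≤ b)
    (h : ∀ x ∈ Set.Ioc a b, f x = g x) :
    ∫ s in a..b, f s = ∫ s in a..b, g s := by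
  apply intervalIntegral.integral_congr_ae
  filter_upwards with x
  intro hx'
  rw [Set.uIoc_of_le hab] at hx'
  exact h x hx'

lemma intInt_piece {f g : ℝ → ℝ} {a b : ℝ} (hab : a ≤ b)
    (h : ∀ x ∈ Set.Ioc a b, f x = g x)
    (hg : IntervalIntegrable g MeasureTheory.volume a b) :
    IntervalIntegrable f MeasureTheory.volume a b := by
  rw [intervalIntegrable_iff_integrableOn_Ioc_of_le hab] at *
  exact hg.congr_fun (fun x hx => (h x hx).symm) measurableSet_Ioc

lemma integral_sin_two_pi (a b : ℝ) :
    ∫ s in a..b, Real.sin (2*Real.pi*s)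
      = (Real.cos (2*Real.pi*a) - Real.cos (2*Real.pi*b)) / (2*Real.pi) := by
  have h2π : (2*Real.pi) ≠ 0 := by positivity
  rw [intervalIntegral.integral_comp_mul_left (fun x => Real.sin x) h2π,
    integral_sin, smul_eq_mul]
  field_simp

lemma btil_cont : Continuous btil := by
  unfold btil
  fun_prop

lemma integral_c_btil (c a b : ℝ) :
    ∫ s in a..b, c * btil s
      = c * ((b-a)/2 + (Real.cos (2*Real.pi*a) - Real.cos (2*Real.pi*b)) / (8*Real.pi)) := by
  rw [intervalIntegral.integral_const_mul]
  have : ∫ s in a..b, btil s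
      = (∫ s in a..b, (1/2:ℝ)) + ∫ s in a..b, (1/4) * Real.sin (2*Real.pi*s) := by
    rw [← intervalIntegral.integral_add intervalIntegrable_const
      (by apply Continuous.intervalIntegrable; fun_prop)]
    rfl
  rw [this, intervalIntegral.integral_const_mul, integral_sin_two_pi,
    intervalIntegral.integral_const, smul_eq_mul]
  have hπ : Real.pi ≠ 0 := Real.pi_ne_zero
  field_simp
  ring

lemma integral_c_half_sub_btil (c a b : ℝ) :
    ∫ s in a..b, c * (1/2 - btil s)
      = - c * (Real.cos (2*Real.pi*a) - Real.cos (2*Real.pi*b)) / (8*Real.pi) := by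
  have heq : ∀ s : ℝ, c * (1/2 - btil s) = (-c/4) * Real.sin (2*Real.pi*s) := by
    intro s; unfold btil; ring
  simp only [heq]
  rw [intervalIntegral.integral_const_mul, integral_sin_two_pi, div_mul_div_comm,
    show (4:ℝ)*(2*Real.pi) = 8*Real.pi by ring]

lemma cos_vals :
    Real.cos (2*Real.pi*0) = 1 ∧ Real.cos (2*Real.pi*(1/4)) = 0 ∧
    Real.cos (2*Real.pi*(1/2)) = -1 ∧ Real.cos (2*Real.pi*1) = 1 := by
  constructor
  · norm_num
  refine ⟨?_, ?_, ?_⟩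
  · rw [show 2*Real.pi*(1/4) = Real.pi/2 by ring, Real.cos_pi_div_two]
  · rw [show 2*Real.pi*(1/2) = Real.pi by ring, Real.cos_pi]
  · rw [show 2*Real.pi*1 = 2*Real.pi by ring, Real.cos_two_pi]

lemma integral_atil : ∫ s in (0:ℝ)..1, atil s = 145/36 := by
  have h1 : ∫ s in (0:ℝ)..(1/4), atil s = 1/4 := by
    rw [integral_congr_piece (by norm_num) (fun x hx => atil_eq1 hx)]
    simp
  have h2 : ∫ s in (1/4:ℝ)..(1/2), atil s = 16/9 := by
    rw [integral_congr_piece (by norm_num) (fun x hx => atil_eq2 hx)]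
    simp; norm_num
  have h3 : ∫ s in (1/2:ℝ)..1, atil s = 2 := by
    rw [integral_congr_piece (by norm_num) (fun x hx => atil_eq3 hx)]
    simp; norm_num
  have i1 : IntervalIntegrable atil MeasureTheory.volume 0 (1/4) :=
    intInt_piece (by norm_num) (fun x hx => atil_eq1 hx) intervalIntegrable_const
  have i2 : IntervalIntegrable atil MeasureTheory.volume (1/4) (1/2) :=
    intInt_piece (by norm_num) (fun x hx => atil_eq2 hx) intervalIntegrable_const
  have i3 : IntervalIntegrable atil MeasureTheory.volume (1/2) 1 :=
    intInt_piece (by norm_num) (fun x hx => atil_eq3 hx) intervalIntegrable_const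
  rw [← intervalIntegral.integral_add_adjacent_intervals (i1.trans i2) i3,
    ← intervalIntegral.integral_add_adjacent_intervals i1 i2, h1, h2, h3]
  norm_num

lemma integral_atil_btil :
    ∫ s in (0:ℝ)..1, atil s * btil s = 145/72 + 1/(72*Real.pi) := by
  obtain ⟨c0, c14, c12, c1⟩ := cos_vals
  have h1 : ∫ s in (0:ℝ)..(1/4), atil s * btil s = 1/8 + 1/(8*Real.pi) := by
    rw [integral_congr_piece (by norm_num) (fun x hx => by rw [atil_eq1 hx]),
      integral_c_btil, c0, c14]
    ring
  have h2 : ∫ s in (1/4:ℝ)..(1/2), atil s * btil s = 8/9 + 8/(9*Real.pi) := by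
    rw [integral_congr_piece (by norm_num) (fun x hx => by rw [atil_eq2 hx]),
      integral_c_btil, c14, c12]
    have hπ : Real.pi ≠ 0 := Real.pi_ne_zero
    field_simp; ring
  have h3 : ∫ s in (1/2:ℝ)..1, atil s * btil s = 1 - 1/Real.pi := by
    rw [integral_congr_piece (by norm_num) (fun x hx => by rw [atil_eq3 hx]),
      integral_c_btil, c12, c1]
    have hπ : Real.pi ≠ 0 := Real.pi_ne_zero
    field_simp; ring
  have hb := btil_cont
  have i1 : IntervalIntegrable (fun s => atil s * btil s) MeasureTheory.volume 0 (1/4) :=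
    intInt_piece (by norm_num) (fun x hx => by rw [atil_eq1 hx]; rfl)
      ((continuous_const.mul hb).intervalIntegrable _ _)
  have i2 : IntervalIntegrable (fun s => atil s * btil s) MeasureTheory.volume (1/4) (1/2) :=
    intInt_piece (by norm_num) (fun x hx => by rw [atil_eq2 hx]; rfl)
      ((continuous_const.mul hb).intervalIntegrable _ _)
  have i3 : IntervalIntegrable (fun s => atil s * btil s) MeasureTheory.volume (1/2) 1 :=
    intInt_piece (by norm_num) (fun x hx => by rw [atil_eq3 hx]; rfl)
      ((continuous_const.mul hb).intervalIntegrable _ _)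
  rw [← intervalIntegral.integral_add_adjacent_intervals (i1.trans i2) i3,
    ← intervalIntegral.integral_add_adjacent_intervals i1 i2, h1, h2, h3]
  have hπ : Real.pi ≠ 0 := Real.pi_ne_zero
  field_simp; ring

lemma sqrt2_pos : (0:ℝ) < Real.sqrt 2 := Real.sqrt_pos.mpr (by norm_num)

lemma sqrt_128_9 : Real.sqrt (2 * (64/9)) = (8/3) * Real.sqrt 2 := by
  rw [show (2 * (64/9) : ℝ) = (8/3)^2 * 2 by norm_num, Real.sqrt_mul (by positivity),
    Real.sqrt_sq (by norm_num)]

lemma sqrt_8 : Real.sqrt (2 * 4 : ℝ) = 2 * Real.sqrt 2 := by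
  rw [show (2 * 4 : ℝ) = 2^2 * 2 by norm_num, Real.sqrt_mul (by positivity),
    Real.sqrt_sq (by norm_num)]

lemma integral_dstar :
    ∫ s in (0:ℝ)..1, Real.sqrt (2 * atil s) * (1/2 - btil s)
      = Real.sqrt 2 / (24 * Real.pi) := by
  obtain ⟨c0, c14, c12, c1⟩ := cos_vals
  have hπ : Real.pi ≠ 0 := Real.pi_ne_zero
  have h1 : ∫ s in (0:ℝ)..(1/4), Real.sqrt (2 * atil s) * (1/2 - btil s)
      = - Real.sqrt 2 / (8*Real.pi) := by
    rw [integral_congr_piece (by norm_num) (fun x hx => by rw [atil_eq1 hx]),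
      integral_c_half_sub_btil, c0, c14]
    norm_num
  have h2 : ∫ s in (1/4:ℝ)..(1/2), Real.sqrt (2 * atil s) * (1/2 - btil s)
      = - Real.sqrt 2 / (3*Real.pi) := by
    rw [integral_congr_piece (by norm_num) (fun x hx => by rw [atil_eq2 hx]),
      integral_c_half_sub_btil, c14, c12, sqrt_128_9]
    field_simp; ring
  have h3 : ∫ s in (1/2:ℝ)..1, Real.sqrt (2 * atil s) * (1/2 - btil s)
      = Real.sqrt 2 / (2*Real.pi) := by
    rw [integral_congr_piece (by norm_num) (fun x hx => by rw [atil_eq3 hx]),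
      integral_c_half_sub_btil, c12, c1, sqrt_8]
    field_simp; ring
  have hcont : ∀ c : ℝ, IntervalIntegrable (fun s => c * (1/2 - btil s))
      MeasureTheory.volume (0:ℝ) 1 := fun c => by
    apply Continuous.intervalIntegrable
    exact continuous_const.mul (continuous_const.sub btil_cont)
  have i1 : IntervalIntegrable (fun s => Real.sqrt (2 * atil s) * (1/2 - btil s))
      MeasureTheory.volume 0 (1/4) :=
    intInt_piece (by norm_num) (fun x hx => by rw [atil_eq1 hx]; rfl)
      (Continuous.intervalIntegrable (continuous_const.mul (continuous_const.sub btil_cont)) _ _)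
  have i2 : IntervalIntegrable (fun s => Real.sqrt (2 * atil s) * (1/2 - btil s))
      MeasureTheory.volume (1/4) (1/2) :=
    intInt_piece (by norm_num) (fun x hx => by rw [atil_eq2 hx]; rfl)
      (Continuous.intervalIntegrable (continuous_const.mul (continuous_const.sub btil_cont)) _ _)
  have i3 : IntervalIntegrable (fun s => Real.sqrt (2 * atil s) * (1/2 - btil s))
      MeasureTheory.volume (1/2) 1 :=
    intInt_piece (by norm_num) (fun x hx => by rw [atil_eq3 hx]; rfl)
      (Continuous.intervalIntegrable (continuous_const.mul (continuous_const.sub btil_cont)) _ _)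
  rw [← intervalIntegral.integral_add_adjacent_intervals (i1.trans i2) i3,
    ← intervalIntegral.integral_add_adjacent_intervals i1 i2, h1, h2, h3]
  field_simp; ring

theorem stmt_14 :
    let d₀ : ℝ := Real.sqrt (2 * ∫ s in (0:ℝ)..1, atil s) *
      (1 / 2 - (∫ s in (0:ℝ)..1, atil s * btil s) / (∫ s in (0:ℝ)..1, atil s))
    let dstar : ℝ := ∫ s in (0:ℝ)..1, Real.sqrt (2 * atil s) * (1 / 2 - btil s)
    d₀ = -(1 / (6 * Real.sqrt 290 * Real.pi)) ∧ d₀ < 0 ∧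
      dstar = Real.sqrt 2 / (24 * Real.pi) ∧ 0 < dstar := by
  intro d₀ dstar
  have hπ : (0:ℝ) < Real.pi := Real.pi_pos
  have h290 : Real.sqrt 290 * Real.sqrt 290 = 290 := Real.mul_self_sqrt (by norm_num)
  have h290pos : (0:ℝ) < Real.sqrt 290 := Real.sqrt_pos.mpr (by norm_num)
  have hsq : Real.sqrt (2 * (145/36 : ℝ)) = Real.sqrt 290 / 6 := by
    rw [show (2 * (145/36) : ℝ) = 290 / 36 by norm_num,
      Real.sqrt_div (by norm_num : (0:ℝ) ≤ 290),
      show Real.sqrt 36 = 6 by rw [show (36:ℝ) = 6^2 by norm_num, Real.sqrt_sq (by norm_num)]]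
  have hd0 : d₀ = -(1 / (6 * Real.sqrt 290 * Real.pi)) := by
    show Real.sqrt (2 * ∫ s in (0:ℝ)..1, atil s) *
      (1 / 2 - (∫ s in (0:ℝ)..1, atil s * btil s) / (∫ s in (0:ℝ)..1, atil s)) = _
    rw [integral_atil, integral_atil_btil, hsq]
    have key : (1/2 - (145/72 + 1/(72*Real.pi))/(145/36 : ℝ)) = -(1/(290*Real.pi)) := by
      field_simp
      ring
    rw [key]
    have hπ' : Real.pi ≠ 0 := ne_of_gt hπ
    have h290' : Real.sqrt 290 ≠ 0 := ne_of_gt h290pos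
    field_simp
    nlinarith [h290, hπ]
  have hds : dstar = Real.sqrt 2 / (24 * Real.pi) := integral_dstar
  refine ⟨hd0, ?_, hds, ?_⟩
  · rw [hd0]
    have : (0:ℝ) < 1 / (6 * Real.sqrt 290 * Real.pi) := by positivity
    linarith
  · rw [hds]; positivity
end

section
/- Let U : ℝ × ℝ → ℝ be continuous, strictly decreasing in x, with ∂_x U(t,x) ≤ -β for all t ∈ ℝ and x ∈ [-C, C] (β, C > 0), and suppose U(t,x) is almost periodic in t uniformly for x ∈ [-C, C]. If z : ℝ → [-C, C] satisfies U(t, z(t)) = 1/2 for all t, then z is almost periodic. -/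
/-!
Uniform almost periodicity of `U` (Bochner's criterion) yields, for every `δ > 0`, a relatively
dense set of common `δ`-almost periods `τ` of the functions `U · x`, `x ∈ [-C, C]`. Since
`∂ₓU ≤ -β`, the mean value theorem gives `β |z (t + τ) - z t| ≤ |U t (z (t + τ)) - U t (z t)|`,
and the right side equals `|U t (z (t + τ)) - U (t + τ) (z (t + τ))| < δ` because both `z t` and
`z (t + τ)` lie on the level set `{U = 1/2}`. Taking `δ = β ε` shows that `τ` is an
`ε`-almost period of `z`.
-/

def AlmostPeriodic (g : ℝ → ℝ) : Prop :=
  ∀ ε > 0, ∃ L > 0, ∀ a : ℝ, ∃ τ ∈ Set.Icc a (a + L), ∀ t : ℝ, |g (t + τ) - g t| < ε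

open Set

theorem exists_forall_Icc_mem_of_forall_seq_sub_mem {P : Set ℝ}
    (hP : ∀ u : ℕ → ℝ, ∃ m n, m < n ∧ u n - u m ∈ P) :
    ∃ L > 0, ∀ a : ℝ, ∃ τ ∈ Icc a (a + L), τ ∈ P := by
  by_contra! hgap
  -- Given finitely many points in `[-M, M]`, a gap of length `2M + 1` at `a` lets `a + M` avoid
  -- `P` against all of them.
  have hstep : ∀ S : Finset ℝ, ∃ y, ∀ s ∈ S, y - s ∉ P := by
    intro S
    set M := ∑ s ∈ S, |s|
    have hM : ∀ s ∈ S, |s| ≤ M := fun s hs =>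
      Finset.single_le_sum (f := fun s => |s|) (fun _ _ => abs_nonneg _) hs
    obtain ⟨a, ha⟩ := hgap (2 * M + 1) (by positivity)
    refine ⟨a + M, fun s hs => ha _ ⟨?_, ?_⟩⟩ <;> linarith [abs_le.mp (hM s hs)]
  obtain ⟨u, -, hu⟩ := exists_seq_of_forall_finset_exists (fun _ => True)
    (fun x y => y - x ∉ P) fun S _ => (hstep S).imp fun y hy => ⟨trivial, hy⟩
  obtain ⟨m, n, hmn, hmem⟩ := hP u
  exact hu m n hmn hmem

theorem exists_sub_almostPeriod_of_forall_seq {α : Type*} (F : ℝ → α → ℝ) (K : Set α)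
    (hF : ∀ t' : ℕ → ℝ, ∃ φ : ℕ → ℕ, StrictMono φ ∧ ∃ V : ℝ → α → ℝ,
      ∀ ε > (0:ℝ), ∃ N : ℕ, ∀ n ≥ N, ∀ t : ℝ, ∀ x ∈ K,
        |F (t + t' (φ n)) x - V t x| < ε)
    {δ : ℝ} (hδ : 0 < δ) (u : ℕ → ℝ) :
    ∃ m n, m < n ∧ ∀ t : ℝ, ∀ x ∈ K, |F (t + (u n - u m)) x - F t x| < δ := by
  obtain ⟨φ, hφ, V, hV⟩ := hF u
  obtain ⟨N, hN⟩ := hV (δ / 2) (half_pos hδ)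
  refine ⟨φ N, φ (N + 1), hφ N.lt_succ_self, fun t x hx => ?_⟩
  have h₁ := hN (N + 1) N.le_succ (t - u (φ N)) x hx
  have h₂ := hN N le_rfl (t - u (φ N)) x hx
  rw [sub_add_comm, add_comm] at h₁
  rw [sub_add_cancel] at h₂
  calc |F (t + (u (φ (N + 1)) - u (φ N))) x - F t x|
      ≤ |F (t + (u (φ (N + 1)) - u (φ N))) x - V (t - u (φ N)) x|
        + |V (t - u (φ N)) x - F t x| := abs_sub_le _ _ _
    _ < δ / 2 + δ / 2 := add_lt_add h₁ (by rwa [abs_sub_comm])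
    _ = δ := add_halves δ

theorem exists_forall_Icc_almostPeriod_of_forall_seq {α : Type*} (F : ℝ → α → ℝ) (K : Set α)
    (hF : ∀ t' : ℕ → ℝ, ∃ φ : ℕ → ℕ, StrictMono φ ∧ ∃ V : ℝ → α → ℝ,
      ∀ ε > (0:ℝ), ∃ N : ℕ, ∀ n ≥ N, ∀ t : ℝ, ∀ x ∈ K,
        |F (t + t' (φ n)) x - V t x| < ε)
    {δ : ℝ} (hδ : 0 < δ) :
    ∃ L > 0, ∀ a : ℝ, ∃ τ ∈ Icc a (a + L), ∀ t : ℝ, ∀ x ∈ K, |F (t + τ) x - F t x| < δ :=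
  exists_forall_Icc_mem_of_forall_seq_sub_mem
    (P := {τ | ∀ t : ℝ, ∀ x ∈ K, |F (t + τ) x - F t x| < δ})
    (exists_sub_almostPeriod_of_forall_seq F K hF hδ)

theorem Convex.mul_abs_sub_le_abs_image_sub_of_deriv_le_neg {D : Set ℝ} (hD : Convex ℝ D)
    {f : ℝ → ℝ} (hf : ContinuousOn f D) {β : ℝ} (hβ : 0 < β)
    (hf' : ∀ x ∈ D, deriv f x ≤ -β) {x y : ℝ} (hx : x ∈ D) (hy : y ∈ D) :
    β * |y - x| ≤ |f y - f x| := by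
  have hdiff : DifferentiableOn ℝ f (interior D) := fun c hc =>
    (differentiableAt_of_deriv_ne_zero
      ((hf' c (interior_subset hc)).trans_lt (neg_neg_of_pos hβ)).ne).differentiableWithinAt
  have hmvt : ∀ x ∈ D, ∀ y ∈ D, x ≤ y → f y - f x ≤ -β * (y - x) :=
    hD.image_sub_le_mul_sub_of_deriv_le hf hdiff fun c hc => hf' c (interior_subset hc)
  rcases le_total x y with hxy | hyx
  · have := hmvt x hx y hy hxy
    rw [abs_of_nonneg (sub_nonneg.mpr hxy), abs_sub_comm]
    linarith [le_abs_self (f x - f y)]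
  · have := hmvt y hy x hx hyx
    rw [abs_of_nonpos (sub_nonpos.mpr hyx)]
    linarith [le_abs_self (f y - f x)]

theorem stmt_19_general (U : ℝ → ℝ → ℝ) (C β : ℝ) (hβ : 0 < β)
    (hUcont : Continuous fun p : ℝ × ℝ => U p.1 p.2)
    (hUx : ∀ t : ℝ, ∀ x ∈ Set.Icc (-C) C, deriv (fun y => U t y) x ≤ -β)
    (hap : ∀ t' : ℕ → ℝ, ∃ φ : ℕ → ℕ, StrictMono φ ∧ ∃ V : ℝ → ℝ → ℝ,
      ∀ ε > (0:ℝ), ∃ N : ℕ, ∀ n ≥ N, ∀ t : ℝ, ∀ x ∈ Set.Icc (-C) C,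
        |U (t + t' (φ n)) x - V t x| < ε)
    (z : ℝ → ℝ) (hzr : ∀ t, z t ∈ Set.Icc (-C) C)
    (hlevel : ∀ t, U t (z t) = 1 / 2) :
    AlmostPeriodic z := by
  intro ε hε
  obtain ⟨L, hL, hτ⟩ :=
    exists_forall_Icc_almostPeriod_of_forall_seq U _ hap (mul_pos hβ hε)
  refine ⟨L, hL, fun a => ?_⟩
  obtain ⟨τ, hτL, hτ⟩ := hτ a
  refine ⟨τ, hτL, fun t => (mul_lt_mul_iff_right₀ hβ).mp ?_⟩
  calc β * |z (t + τ) - z t|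
      ≤ |U t (z (t + τ)) - U t (z t)| :=
        (convex_Icc (-C) C).mul_abs_sub_le_abs_image_sub_of_deriv_le_neg
          (hUcont.comp (Continuous.prodMk_right t)).continuousOn hβ (hUx t) (hzr t) (hzr _)
    _ = |U (t + τ) (z (t + τ)) - U t (z (t + τ))| := by
        rw [hlevel, hlevel, abs_sub_comm]
    _ < β * ε := hτ t _ (hzr _)

theorem stmt_19 (U : ℝ → ℝ → ℝ) (C β : ℝ) (hC : 0 < C) (hβ : 0 < β)
    (hUcont : Continuous fun p : ℝ × ℝ => U p.1 p.2)
    (hmono : ∀ t : ℝ, StrictAnti (U t))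
    (hUx : ∀ t : ℝ, ∀ x ∈ Set.Icc (-C) C, deriv (fun y => U t y) x ≤ -β)
    (hap : ∀ t' : ℕ → ℝ, ∃ φ : ℕ → ℕ, StrictMono φ ∧ ∃ V : ℝ → ℝ → ℝ,
      ∀ ε > (0:ℝ), ∃ N : ℕ, ∀ n ≥ N, ∀ t : ℝ, ∀ x ∈ Set.Icc (-C) C,
        |U (t + t' (φ n)) x - V t x| < ε)
    (z : ℝ → ℝ) (hzc : Continuous z) (hzr : ∀ t, z t ∈ Set.Icc (-C) C)
    (hlevel : ∀ t, U t (z t) = 1 / 2) :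
    AlmostPeriodic z :=
  stmt_19_general U C β hβ hUcont hUx hap z hzr hlevel
end
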